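/- arXiv:1705.05251 — 2 statements merged into one kernel-verified Lean document; each statement's English description precedes it below -/
import Mathlib

section
/- Let Δ, n be positive reals and let a = n·(Δ − I − L/S_p) and b = n·Δ with 0 < I + L/S_p < Δ. Let θ_prev ∈ {0, 1} denote the previous-interval traffic light, let k be an integer with k ≥ 1, and assume θ_prev = 0 whenever k = 1. Then there exists M₀ such that for every M ≥ M₀ the following holds: there exists δ ∈ {0, 1} such that the integer P̂ satisfies the big-M system M(δ − 1) ≤ k − 1 ≤ M(1 − δ); P̂ − a ≤ M(1 − δ); −P̂ + a − 1 < M(1 − δ); P̂ − a ≤ M·θ_prev; −P̂ + a − 1 < M·θ_prev; P̂ − b ≤ M(1 − θ_prev); −P̂ + b − 1 < M(1 − θ_prev), if and only if P̂ = ⌊a⌋ when θ_prev = 0 and P̂ = ⌊b⌋ when θ_prev = 1. -/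
/-- Big-M reformulation of the piecewise crosswalk-capacity function
(Proposition 3): with `a = n·(Δ - I - L/Sp)`, `b = n·Δ`,
`0 < I + L/Sp < Δ`, a binary previous light `θprev`, an interval index
`k ≥ 1` with `θprev = 0` whenever `k = 1`, there exists `M₀` such that
for every `M ≥ M₀`: some binary `δ` satisfies the big-M system iff the
integer capacity `Phat` equals `⌊a⌋` when `θprev = 0` and `⌊b⌋` when
`θprev = 1`. -/
theorem bigM_capacity_selection (Δ n I L Sp : ℝ) (hΔ : 0 < Δ) (hn : 0 < n)
    (hIL0 : 0 < I + L / Sp) (hILΔ : I + L / Sp < Δ)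
    (θprev : ℝ) (hθ : θprev = 0 ∨ θprev = 1)
    (k : ℤ) (hk : 1 ≤ k) (hk1 : k = 1 → θprev = 0)
    (Phat : ℤ) :
    ∃ M₀ : ℝ, ∀ M : ℝ, M₀ ≤ M →
      ((∃ δ : ℝ, (δ = 0 ∨ δ = 1) ∧
          M * (δ - 1) ≤ (k : ℝ) - 1 ∧ (k : ℝ) - 1 ≤ M * (1 - δ) ∧
          (Phat : ℝ) - n * (Δ - I - L / Sp) ≤ M * (1 - δ) ∧
          -(Phat : ℝ) + n * (Δ - I - L / Sp) - 1 < M * (1 - δ) ∧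
          (Phat : ℝ) - n * (Δ - I - L / Sp) ≤ M * θprev ∧
          -(Phat : ℝ) + n * (Δ - I - L / Sp) - 1 < M * θprev ∧
          (Phat : ℝ) - n * Δ ≤ M * (1 - θprev) ∧
          -(Phat : ℝ) + n * Δ - 1 < M * (1 - θprev))
        ↔ ((θprev = 0 → Phat = ⌊n * (Δ - I - L / Sp)⌋) ∧
           (θprev = 1 → Phat = ⌊n * Δ⌋))) := by

  set a := n * (Δ - I - L / Sp) with ha
  set b := n * Δ with hb
  have hk' : (0:ℝ) ≤ (k : ℝ) - 1 := by
    have : (1:ℝ) ≤ (k:ℝ) := by exact_mod_cast hk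
    linarith
  refine ⟨|(Phat : ℝ) - a| + |(Phat : ℝ) - b| + ((k : ℝ) - 1) + 1, fun M hM => ?_⟩
  have habs1 : (Phat : ℝ) - a ≤ |(Phat : ℝ) - a| := le_abs_self _
  have habs2 : -(|(Phat : ℝ) - a|) ≤ (Phat : ℝ) - a := neg_abs_le _
  have habs3 : (Phat : ℝ) - b ≤ |(Phat : ℝ) - b| := le_abs_self _
  have habs4 : -(|(Phat : ℝ) - b|) ≤ (Phat : ℝ) - b := neg_abs_le _
  have hA1 : (0:ℝ) ≤ |(Phat : ℝ) - a| := abs_nonneg _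
  have hA2 : (0:ℝ) ≤ |(Phat : ℝ) - b| := abs_nonneg _
  constructor
  · rintro ⟨δ, hδ, h1, h2, h3, h4, h5, h6, h7, h8⟩
    constructor
    · intro h0
      rw [h0, mul_zero] at h5 h6
      exact (Int.floor_eq_iff.mpr ⟨by linarith, by linarith⟩).symm
    · intro h1'
      rw [h1'] at h7 h8
      simp only [sub_self, mul_zero] at h7 h8
      exact (Int.floor_eq_iff.mpr ⟨by linarith, by linarith⟩).symm
  · rintro ⟨H0, H1⟩
    rcases hθ with h0 | h1
    · have hfa : Phat = ⌊a⌋ := H0 h0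
      have hfa1 : ((⌊a⌋ : ℤ) : ℝ) ≤ a := Int.floor_le a
      have hfa2 : a < (⌊a⌋ : ℝ) + 1 := Int.lt_floor_add_one a
      subst h0
      rw [hfa] at habs1 habs2 habs3 habs4 hM
      rw [hfa]
      refine ⟨0, Or.inl rfl, ?_, ?_, ?_, ?_, ?_, ?_, ?_, ?_⟩ <;>
        · norm_num; try linarith
    · have hfb : Phat = ⌊b⌋ := H1 h1
      have hfb1 : ((⌊b⌋ : ℤ) : ℝ) ≤ b := Int.floor_le b
      have hfb2 : b < (⌊b⌋ : ℝ) + 1 := Int.lt_floor_add_one b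
      subst h1
      rw [hfb] at habs1 habs2 habs3 habs4 hM
      rw [hfb]
      refine ⟨0, Or.inl rfl, ?_, ?_, ?_, ?_, ?_, ?_, ?_, ?_⟩ <;>
        · norm_num; try linarith
end

section
/- Let H ≥ 1 be a natural number and θ : {0, 1, …, H+1} → {0, 1}. Define h : {0, …, H} → ℕ by h(0) = 0, h(k) = k if θ(k) ≠ θ(k+1) and h(k) = 0 otherwise for 1 ≤ k ≤ H − 1, and h(H) = H. Define q : {0, …, H} → ℕ recursively by q(0) = 0 and, for k ≥ 1: q(k) = max(h(k) − h(k−1), 0) if h(k−1) ≠ 0, and q(k) = max(h(k) − h(k−1) − Σ_{i=0}^{k−1} q(i), 0) if h(k−1) = 0. Then for every k ∈ {1, …, H} with h(k) ≠ 0: (i) Σ_{i=0}^{k} q(i) = k, and (ii) q(k) = k − k', where k' is the largest index with 0 ≤ k' < k and h(k') ≠ 0 (taking k' = 0 if no such index exists); moreover q(k) = 0 whenever h(k) = 0. -/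
/-- Correctness of the recursive auxiliary function `q` in the
pedestrian unhappiness model: `h` marks the switching times of the
binary signal sequence `θ` over the horizon `{0,…,H}` (with the
endpoint `H` always counted), and `q` is defined recursively so that at
every switching time `k` (i.e. `h k ≠ 0`) it returns the duration of
the sub-sequence ending there: (i) `Σ_{i=0}^{k} q(i) = k`, and
(ii) `q(k) = k - k'` where `k'` is the largest index below `k` with
`h k' ≠ 0` (taking `k' = 0` if none exists); moreover `q(k) = 0`
whenever `h(k) = 0`. -/
theorem unhappiness_aux_q_correct (H : ℕ) (hH : 1 ≤ H) (θ h q : ℕ → ℕ)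
    (hθ : ∀ k ≤ H + 1, θ k = 0 ∨ θ k = 1)
    (hh0 : h 0 = 0)
    (hhmid : ∀ k, 1 ≤ k → k ≤ H - 1 → h k = if θ k ≠ θ (k + 1) then k else 0)
    (hhH : h H = H)
    (hq0 : q 0 = 0)
    (hqrec : ∀ k, 1 ≤ k → k ≤ H →
      (h (k - 1) ≠ 0 →
        (q k : ℤ) = max ((h k : ℤ) - (h (k - 1) : ℤ)) 0) ∧
      (h (k - 1) = 0 →
        (q k : ℤ) = max ((h k : ℤ) - (h (k - 1) : ℤ)
          - ∑ i ∈ Finset.range k, (q i : ℤ)) 0)) :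
    ∀ k, 1 ≤ k → k ≤ H →
      (h k ≠ 0 →
        (∑ i ∈ Finset.range (k + 1), q i = k) ∧
        (∀ k', k' < k → (h k' ≠ 0 ∨ k' = 0) →
          (∀ j, k' < j → j < k → h j = 0) → q k = k - k')) ∧
      (h k = 0 → q k = 0) := by

  have hfact : ∀ j, j ≤ H → h j = j ∨ h j = 0 := by
    intro j hj
    rcases Nat.eq_or_lt_of_le hj with rfl | hj'
    · left; exact hhH
    · rcases Nat.eq_zero_or_pos j with rfl | hj1
      · right; exact hh0
      · rw [hhmid j hj1 (by omega)]
        split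
        · left; rfl
        · right; rfl
  have key : ∀ k, k ≤ H → ∃ m, (∑ i ∈ Finset.range (k+1), q i = m) ∧ m ≤ k ∧
      (h m ≠ 0 ∨ m = 0) ∧ (∀ j, m < j → j ≤ k → h j = 0) := by
    intro k
    induction k with
    | zero =>
      intro _
      exact ⟨0, by simpa using hq0, le_refl 0, Or.inr rfl, by omega⟩
    | succ k ih =>
      intro hk
      obtain ⟨m, hsum, hmk, hmne, hzero⟩ := ih (by omega)
      obtain ⟨hrec1, hrec2⟩ := hqrec (k+1) (by omega) hk
      simp only [Nat.add_sub_cancel] at hrec1 hrec2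
      have hsum' : (∑ i ∈ Finset.range (k+1), (q i : ℤ)) = (m : ℤ) := by
        rw [← hsum]; push_cast; ring
      have hhk1 : h (k+1) = k+1 ∨ h (k+1) = 0 := hfact (k+1) hk
      have hsums : ∑ i ∈ Finset.range (k+1+1), q i = (∑ i ∈ Finset.range (k+1), q i) + q (k+1) :=
        Finset.sum_range_succ q (k+1)
      by_cases hk0 : h k = 0
      · have hq : (q (k+1) : ℤ) = max ((h (k+1):ℤ) - (h k:ℤ)
            - ∑ i ∈ Finset.range (k+1), (q i : ℤ)) 0 := hrec2 hk0
        rw [hsum'] at hq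
        rcases hhk1 with h1 | h1
        · refine ⟨k+1, ?_, le_refl _, Or.inl (by omega), fun j hj hj' => by omega⟩
          omega
        · refine ⟨m, ?_, by omega, hmne, fun j hj hj' => ?_⟩
          · omega
          · rcases Nat.lt_or_ge j (k+1) with hjk | hjk
            · exact hzero j hj (by omega)
            · have : j = k+1 := by omega
              rw [this]; exact h1
      · have hq : (q (k+1) : ℤ) = max ((h (k+1):ℤ) - (h k:ℤ)) 0 := hrec1 hk0
        have hmk' : m = k := by
          by_contra hne
          exact hk0 (hzero k (by omega) (le_refl k))
        have hhk : h k = k := by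
          rcases hfact k (by omega) with h2 | h2
          · exact h2
          · exact absurd h2 hk0
        rcases hhk1 with h1 | h1
        · refine ⟨k+1, ?_, le_refl _, Or.inl (by omega), fun j hj hj' => by omega⟩
          omega
        · refine ⟨m, ?_, by omega, hmne, fun j hj hj' => ?_⟩
          · omega
          · rcases Nat.lt_or_ge j (k+1) with hjk | hjk
            · exact hzero j hj (by omega)
            · have : j = k+1 := by omega
              rw [this]; exact h1
  intro k hk1 hkH
  have hk1' : k - 1 + 1 = k := by omega
  obtain ⟨m, hsum, hmk, hmne, hzero⟩ := key (k-1) (by omega)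
  rw [hk1'] at hsum
  have hsums : ∑ i ∈ Finset.range (k+1), q i = (∑ i ∈ Finset.range k, q i) + q k :=
    Finset.sum_range_succ q k
  obtain ⟨hrec1, hrec2⟩ := hqrec k hk1 hkH
  have hsumZ : (∑ i ∈ Finset.range k, (q i : ℤ)) = (m : ℤ) := by
    rw [← hsum]; push_cast; ring
  constructor
  · intro hkne
    obtain ⟨m2, hsum2, hmk2, hmne2, hzero2⟩ := key k hkH
    have hm2k : m2 = k := by
      by_contra hne
      exact hkne (hzero2 k (by omega) (le_refl k))
    rw [hm2k] at hsum2
    refine ⟨hsum2, fun k' hk'lt hk'ne hk'zero => ?_⟩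
    have hk'm : k' = m := by
      rcases Nat.lt_trichotomy k' m with hlt | heq | hgt
      · rcases hmne with hm | hm
        · exact absurd (hk'zero m hlt (by omega)) hm
        · omega
      · exact heq
      · rcases hk'ne with hne | hne
        · exact absurd (hzero k' hgt (by omega)) hne
        · omega
    omega
  · intro hk0
    by_cases hkm1 : h (k-1) = 0
    · have hq := hrec2 hkm1
      rw [hsumZ] at hq
      omega
    · have hq := hrec1 hkm1
      omega
end
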